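/- Let α be a type and u, v nonempty words (lists) over α. If the bi-infinite periodic words determined by u and v coincide, i.e., if the functions ℤ → α given by i ↦ u.get (i mod |u|) and i ↦ v.get (i mod |v|) are equal, then u and v are both powers of a common word: there exists a nonempty word w and integers a, b ≥ 1 with u = w^a and v = w^b. -/

import Mathlib

/-!
The bi-infinite word `f` determined by `u` has period `|u|`; being also the word determined
by `v`, it has period `|v|` as well, hence (Bézout) period `g = gcd(|u|, |v|)`. So `f` is the
periodic extension of its first `g` letters `w`, and `u`, `v`, which are read off `f` on
`[0, |u|)` and `[0, |v|)`, are the powers `w^(|u|/g)` and `w^(|v|/g)`.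
-/

def listPow {α : Type*} (w : List α) (a : ℕ) : List α :=
  (List.replicate a w).flatten

namespace Function.Periodic

variable {α : Type*} {f : ℤ → α}

theorem int_gcd {m n : ℤ} (hm : Periodic f m) (hn : Periodic f n) :
    Periodic f (Int.gcd m n) := by
  rw [Int.gcd_eq_gcd_ab, mul_comm m, mul_comm n]
  exact (hm.int_mul _).add_period (hn.int_mul _)

theorem map_emod {c : ℤ} (hf : Periodic f c) (i : ℤ) : f (i % c) = f i := by
  conv_rhs => rw [← Int.emod_add_mul_ediv i c, mul_comm]
  exact ((hf.int_mul (i / c)) (i % c)).symm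

end Function.Periodic

section listPow

variable {α : Type*}

theorem length_listPow (w : List α) (a : ℕ) : (listPow w a).length = a * w.length := by
  simp [listPow]

theorem getElem_listPow (w : List α) (a k : ℕ) (hk : k < (listPow w a).length)
    (hw : k % w.length < w.length) : (listPow w a)[k] = w[k % w.length] := by
  have e : listPow w a = List.ofFn (Fin.repeat a fun j : Fin w.length => w[j]) := by
    simp [List.ofFn_fin_repeat, listPow]
  rw [List.getElem_of_eq e, List.getElem_ofFn]
  simp [Fin.repeat, Fin.modNat]

theorem eq_listPow_of_getElem_mod {s w : List α} (hw : w ≠ []) (hdvd : w.length ∣ s.length)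
    (h : ∀ k (hk : k < s.length),
      s[k] = w[k % w.length]'(Nat.mod_lt _ (List.length_pos_iff.mpr hw))) :
    s = listPow w (s.length / w.length) := by
  apply List.ext_getElem
  · rw [length_listPow, Nat.div_mul_cancel hdvd]
  · intro k hks _
    rw [getElem_listPow, h k hks]

end listPow

section periodicWord

variable {α : Type*}

/-- The default `d` is read only when `u = []`. -/
def periodicWord (u : List α) (d : α) (i : ℤ) : α :=
  u.getD (i % (u.length : ℤ)).toNat d

theorem periodicWord_periodic (u : List α) (d : α) :
    Function.Periodic (periodicWord u d) u.length := by
  intro i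
  simp [periodicWord]

theorem periodicWord_natCast (u : List α) (d : α) {k : ℕ} (hk : k < u.length) :
    periodicWord u d k = u[k] := by
  have hmod : (k : ℤ) % u.length = k := Int.emod_eq_of_lt (by positivity) (by exact_mod_cast hk)
  simp [periodicWord, hmod, hk]

theorem eq_listPow_of_periodic {f : ℤ → α} {g : ℕ} (hf : Function.Periodic f g) (hg : 0 < g)
    {s w : List α} (hw : w.length = g) (hwf : ∀ k (hk : k < w.length), w[k] = f k)
    (hsf : ∀ k (hk : k < s.length), s[k] = f k) (hdvd : g ∣ s.length) :
    s = listPow w (s.length / g) := by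
  have hw₀ : w ≠ [] := List.length_pos_iff.mp (hw ▸ hg)
  subst hw
  refine eq_listPow_of_getElem_mod hw₀ hdvd fun k hk => ?_
  rw [hsf k hk, hwf, Int.natCast_mod, hf.map_emod]

end periodicWord

/-- If the bi-infinite periodic words `i ↦ u.get (i mod |u|)` and `i ↦ v.get (i mod |v|)`
determined by two nonempty words `u` and `v` coincide, then `u` and `v` are powers of a
common nonempty word. -/
theorem stmt_6 {α : Type*} (u v : List α) (hu : u ≠ []) (hv : v ≠ [])
    (h : (fun i : ℤ => u.getD (i % (u.length : ℤ)).toNat (u.head hu))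
       = (fun i : ℤ => v.getD (i % (v.length : ℤ)).toNat (v.head hv))) :
    ∃ (w : List α) (a b : ℕ), w ≠ [] ∧ 1 ≤ a ∧ 1 ≤ b ∧
      u = listPow w a ∧ v = listPow w b := by
  set f := periodicWord u (u.head hu)
  have hfv : f = periodicWord v (v.head hv) := h
  set g := u.length.gcd v.length
  have hg : 0 < g := Nat.gcd_pos_of_pos_left _ (List.length_pos_iff.mpr hu)
  have hgu : g ≤ u.length := Nat.le_of_dvd (List.length_pos_iff.mpr hu) (Nat.gcd_dvd_left _ _)
  have hgv : g ≤ v.length := Nat.le_of_dvd (List.length_pos_iff.mpr hv) (Nat.gcd_dvd_right _ _)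
  have hf : Function.Periodic f g := by
    have := (periodicWord_periodic u (u.head hu)).int_gcd
      (hfv ▸ periodicWord_periodic v (v.head hv))
    rwa [Int.gcd_natCast_natCast] at this
  have hwlen : (u.take g).length = g := by simp [hgu]
  have hwf : ∀ k (hk : k < (u.take g).length), (u.take g)[k] = f k := fun k hk => by
    simp [f, periodicWord_natCast u _ (lt_of_lt_of_le hk (by simp))]
  refine ⟨u.take g, u.length / g, v.length / g, List.ne_nil_of_length_pos (by omega),
    Nat.div_pos hgu hg, Nat.div_pos hgv hg, ?_, ?_⟩
  · exact eq_listPow_of_periodic hf hg hwlen hwf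
      (fun k hk => (periodicWord_natCast u _ hk).symm) (Nat.gcd_dvd_left _ _)
  · exact eq_listPow_of_periodic hf hg hwlen hwf
      (fun k hk => hfv ▸ (periodicWord_natCast v _ hk).symm) (Nat.gcd_dvd_right _ _)
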